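/- arXiv:2407.18799 — 2 statements merged into one kernel-verified Lean document; each statement's English description precedes it below -/
import Mathlib

section
/- For any n ∈ ℕ and real p with 0 ≤ p ≤ 1, the function (F, J) ↦ |F|²/J^p, defined on n×n real matrices F and positive reals J (with |F| the Frobenius norm), is convex. -/
/-- Scalar Cauchy–Schwarz step: `(a c + b d)² ≤ (a c²/u + b d²/v)(a u + b v)`. -/
lemma cs_step (a b c d u v : ℝ) (hu : 0 < u) (hv : 0 < v) (ha : 0 ≤ a) (hb : 0 ≤ b) :
    (a * c + b * d) ^ 2 ≤ (a * (c ^ 2 / u) + b * (d ^ 2 / v)) * (a * u + b * v) := by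
  have h1 : a * (c ^ 2 / u) + b * (d ^ 2 / v) = (a * c ^ 2 * v + b * d ^ 2 * u) / (u * v) := by
    field_simp
  rw [h1, div_mul_eq_mul_div, le_div_iff₀ (by positivity)]
  nlinarith [mul_nonneg (mul_nonneg ha hb) (sq_nonneg (c * v - d * u))]

set_option maxHeartbeats 1000000 in
/-- For `0 ≤ p ≤ 1`, the map `(F, J) ↦ |F|²/Jᵖ` (Frobenius norm squared divided by
a power of `J`) is convex on `ℝ^{n×n} × (0, ∞)`. -/
theorem frobenius_over_power_convex (n : ℕ) (p : ℝ) (hp0 : 0 ≤ p) (hp1 : p ≤ 1) :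
    ConvexOn ℝ {x : Matrix (Fin n) (Fin n) ℝ × ℝ | 0 < x.2}
      (fun x : Matrix (Fin n) (Fin n) ℝ × ℝ =>
        (∑ i, ∑ j, x.1 i j ^ 2) / x.2 ^ p) := by
  constructor
  · have : {x : Matrix (Fin n) (Fin n) ℝ × ℝ | 0 < x.2}
        = (LinearMap.snd ℝ (Matrix (Fin n) (Fin n) ℝ) ℝ) ⁻¹' Set.Ioi 0 := rfl
    rw [this]
    exact (convex_Ioi 0).linear_preimage _
  · rintro ⟨F, t⟩ (ht : 0 < t) ⟨G, s⟩ (hs : 0 < s) a b ha hb hab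
    simp only [Prod.smul_fst, Prod.smul_snd, Prod.fst_add, Prod.snd_add, smul_eq_mul,
      Matrix.add_apply, Matrix.smul_apply, Prod.mk_add_mk, Prod.smul_mk]
    set A : ℝ := ∑ i, ∑ j, F i j ^ 2 with hA
    set B : ℝ := ∑ i, ∑ j, G i j ^ 2 with hB
    have hu : (0:ℝ) < t ^ p := Real.rpow_pos_of_pos ht p
    have hv : (0:ℝ) < s ^ p := Real.rpow_pos_of_pos hs p
    have hw : (0:ℝ) < (a * t + b * s) ^ p := by
      have : (0:ℝ) < a * t + b * s := by
        rcases eq_or_lt_of_le ha with h | h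
        · have hb1 : b = 1 := by linarith
          simp [← h, hb1, hs]
        · nlinarith
      exact Real.rpow_pos_of_pos this p
    -- concavity of rpow
    have hconc : a * t ^ p + b * s ^ p ≤ (a * t + b * s) ^ p := by
      have := (Real.concaveOn_rpow hp0 hp1).2 (Set.mem_Ici.2 ht.le) (Set.mem_Ici.2 hs.le)
        ha hb hab
      simpa [smul_eq_mul] using this
    -- entrywise Cauchy-Schwarz summed
    have hCS : (∑ i, ∑ j, (a * F i j + b * G i j) ^ 2)
        ≤ (a * (A / t ^ p) + b * (B / s ^ p)) * (a * t ^ p + b * s ^ p) := by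
      have : (∑ i, ∑ j, (a * F i j + b * G i j) ^ 2)
          ≤ ∑ i, ∑ j, (a * (F i j ^ 2 / t ^ p) + b * (G i j ^ 2 / s ^ p))
            * (a * t ^ p + b * s ^ p) := by
        refine Finset.sum_le_sum fun i _ => Finset.sum_le_sum fun j _ => ?_
        exact cs_step a b (F i j) (G i j) (t ^ p) (s ^ p) hu hv ha hb
      refine this.trans_eq ?_
      simp only [← Finset.sum_mul]
      congr 1
      simp only [Finset.sum_add_distrib, ← Finset.mul_sum, ← Finset.sum_div]
      rfl
    have hRHSnn : 0 ≤ a * (A / t ^ p) + b * (B / s ^ p) := by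
      have hAnn : 0 ≤ A := Finset.sum_nonneg fun i _ => Finset.sum_nonneg fun j _ => sq_nonneg _
      have hBnn : 0 ≤ B := Finset.sum_nonneg fun i _ => Finset.sum_nonneg fun j _ => sq_nonneg _
      positivity
    rw [div_le_iff₀ hw]
    calc (∑ i, ∑ j, (a * F i j + b * G i j) ^ 2)
        ≤ (a * (A / t ^ p) + b * (B / s ^ p)) * (a * t ^ p + b * s ^ p) := hCS
      _ ≤ (a * (A / t ^ p) + b * (B / s ^ p)) * (a * t + b * s) ^ p :=
          mul_le_mul_of_nonneg_left hconc hRHSnn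
end

section
/- For real p with 0 ≤ p ≤ 1, the Hessian of (F, J) ↦ |F|²/J^p at any (F, J) with J > 0, given in block form by [[2J^{−p} Id, −2p F/J^{p+1}], [−2p Fᵀ/J^{p+1}, p(p+1)|F|²/J^{p+2}]], has determinant 2⁹ p(1−p) J^{−10p−2} |F|² ≥ 0 when F is a 3×3 matrix. -/
open Matrix

theorem aux_det {ι : Type*} [Fintype ι] [DecidableEq ι] (c d : ℝ) (hc : c ≠ 0) (b : ι → ℝ)
    (B : Matrix ι (Fin 1) ℝ) (C : Matrix (Fin 1) ι ℝ) (D : Matrix (Fin 1) (Fin 1) ℝ)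
    (hB : ∀ i k, B i k = b i) (hC : ∀ k i, C k i = b i) (hD : D 0 0 = d) :
    (Matrix.fromBlocks (c • (1 : Matrix ι ι ℝ)) B C D).det
    = c ^ (Fintype.card ι) * (d - c⁻¹ * ∑ i, b i ^ 2) := by
  set A := c • (1 : Matrix ι ι ℝ) with hA
  have hdetA : A.det = c ^ (Fintype.card ι) := by
    rw [hA, Matrix.det_smul, Matrix.det_one, mul_one]
  haveI : Invertible A := A.invertibleOfIsUnitDet (by
    rw [hdetA]; exact isUnit_iff_ne_zero.2 (pow_ne_zero _ hc))
  have hAinv : A⁻¹ = c⁻¹ • (1 : Matrix ι ι ℝ) := by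
    apply Matrix.inv_eq_right_inv
    rw [hA, smul_mul_smul_comm, one_mul, mul_inv_cancel₀ hc, one_smul]
  rw [Matrix.det_fromBlocks₁₁, hdetA, Matrix.invOf_eq_nonsing_inv, hAinv]
  rw [Matrix.mul_smul, Matrix.mul_one, Matrix.smul_mul]
  rw [Matrix.det_fin_one]
  simp only [Matrix.sub_apply, Matrix.smul_apply, Matrix.mul_apply,
    smul_eq_mul, sq, hB, hC, hD]

/-- The Hessian of `(F, J) ↦ |F|²/Jᵖ` at a 3×3 matrix `F` and `J > 0`, in block form
`[[2J^{−p} Id, −2pF/J^{p+1}], [−2pFᵀ/J^{p+1}, p(p+1)|F|²/J^{p+2}]]`, has determinant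
`2⁹ p(1−p) J^{−10p−2} |F|²`, which is nonnegative for `0 ≤ p ≤ 1`. -/
theorem neoHookean_hessian_det (p : ℝ) (hp0 : 0 ≤ p) (hp1 : p ≤ 1)
    (F : Matrix (Fin 3) (Fin 3) ℝ) (J : ℝ) (hJ : 0 < J) :
    (Matrix.fromBlocks
        ((2 * J ^ (-p)) • (1 : Matrix (Fin 3 × Fin 3) (Fin 3 × Fin 3) ℝ))
        (Matrix.of fun ij (_ : Fin 1) => -2 * p * F ij.1 ij.2 / J ^ (p + 1))
        (Matrix.of fun (_ : Fin 1) ij => -2 * p * F ij.1 ij.2 / J ^ (p + 1))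
        (Matrix.of fun (_ : Fin 1) (_ : Fin 1) =>
          p * (p + 1) * (∑ i, ∑ j, F i j ^ 2) / J ^ (p + 2))).det
      = 2 ^ 9 * p * (1 - p) * J ^ (-(10 * p) - 2) * (∑ i, ∑ j, F i j ^ 2) ∧
    0 ≤ (Matrix.fromBlocks
        ((2 * J ^ (-p)) • (1 : Matrix (Fin 3 × Fin 3) (Fin 3 × Fin 3) ℝ))
        (Matrix.of fun ij (_ : Fin 1) => -2 * p * F ij.1 ij.2 / J ^ (p + 1))
        (Matrix.of fun (_ : Fin 1) ij => -2 * p * F ij.1 ij.2 / J ^ (p + 1))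
        (Matrix.of fun (_ : Fin 1) (_ : Fin 1) =>
          p * (p + 1) * (∑ i, ∑ j, F i j ^ 2) / J ^ (p + 2))).det := by
  have hSnn : (0:ℝ) ≤ ∑ i, ∑ j, F i j ^ 2 := by positivity
  have ht : (0:ℝ) < J ^ p := Real.rpow_pos_of_pos hJ p
  have hc : (0:ℝ) < 2 * J ^ (-p) := by positivity
  have key : (Matrix.fromBlocks
        ((2 * J ^ (-p)) • (1 : Matrix (Fin 3 × Fin 3) (Fin 3 × Fin 3) ℝ))
        (Matrix.of fun ij (_ : Fin 1) => -2 * p * F ij.1 ij.2 / J ^ (p + 1))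
        (Matrix.of fun (_ : Fin 1) ij => -2 * p * F ij.1 ij.2 / J ^ (p + 1))
        (Matrix.of fun (_ : Fin 1) (_ : Fin 1) =>
          p * (p + 1) * (∑ i, ∑ j, F i j ^ 2) / J ^ (p + 2))).det
      = 2 ^ 9 * p * (1 - p) * J ^ (-(10 * p) - 2) * (∑ i, ∑ j, F i j ^ 2) := by
    rw [aux_det (2 * J ^ (-p)) (p * (p + 1) * (∑ i, ∑ j, F i j ^ 2) / J ^ (p + 2)) hc.ne'
      (fun ij : Fin 3 × Fin 3 => -2 * p * F ij.1 ij.2 / J ^ (p + 1))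
      (Matrix.of fun ij (_ : Fin 1) => -2 * p * F ij.1 ij.2 / J ^ (p + 1))
      (Matrix.of fun (_ : Fin 1) ij => -2 * p * F ij.1 ij.2 / J ^ (p + 1))
      (Matrix.of fun (_ : Fin 1) (_ : Fin 1) =>
        p * (p + 1) * (∑ i, ∑ j, F i j ^ 2) / J ^ (p + 2))
      (fun _ _ => rfl) (fun _ _ => rfl) rfl, Fintype.card_prod]
    rw [Fintype.sum_prod_type]
    have hJp1 : J ^ (p + 1) = J ^ p * J := by
      rw [Real.rpow_add hJ, Real.rpow_one]
    have hJp2 : J ^ (p + 2) = J ^ p * J ^ (2:ℕ) := by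
      rw [Real.rpow_add hJ]; norm_num [Real.rpow_natCast]
    have hJneg : J ^ (-p) = (J ^ p)⁻¹ := Real.rpow_neg hJ.le p
    have hJbig : J ^ (-(10 * p) - 2) = ((J ^ p) ^ (10:ℕ) * J ^ (2:ℕ))⁻¹ := by
      rw [show -(10 * p) - 2 = -(p * 10 + 2) by ring, Real.rpow_neg hJ.le,
        Real.rpow_add hJ, Real.rpow_mul hJ.le]
      norm_num [Real.rpow_natCast]
    have hsum : ∑ i, ∑ j, (-2 * p * F i j / J ^ (p + 1)) ^ 2
        = 4 * p ^ 2 / (J ^ p * J) ^ 2 * ∑ i, ∑ j, F i j ^ 2 := by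
      rw [Finset.mul_sum]
      refine Finset.sum_congr rfl fun i _ => ?_
      rw [Finset.mul_sum]
      refine Finset.sum_congr rfl fun j _ => ?_
      rw [hJp1]; ring
    rw [hsum, hJneg, hJp2, hJbig]
    have hJne : J ≠ 0 := hJ.ne'
    have htne : J ^ p ≠ 0 := ht.ne'
    norm_num
    field_simp
    ring
  refine ⟨key, ?_⟩
  rw [key]
  have h2 : (0:ℝ) < J ^ (-(10*p) - 2) := Real.rpow_pos_of_pos hJ _
  exact mul_nonneg (mul_nonneg (mul_nonneg
    (mul_nonneg (by norm_num) hp0) (by linarith)) h2.le) hSnn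
end
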